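/- arXiv:math/0011164 — 3 statements merged into one kernel-verified Lean document; each statement's English description precedes it below -/
import Mathlib

section
/- In the algebra B_d one has [K₁; b₁]·[K₂; b₂] = 0 for all b₁, b₂ ∈ ℕ with b₁ + b₂ ≥ d + 1. -/
noncomputable section

/-- The base field `F = ℚ(v)`. -/
abbrev F : Type := RatFunc ℚ

/-- The indeterminate `v`. -/
def v : F := RatFunc.X

/-- The quantum integer `[r] = (v^r − v^{−r})/(v − v⁻¹)`. -/
def qint (r : ℤ) : F := (v ^ r - v ^ (-r)) / (v - v⁻¹)

/-- The quantum factorial `[m]! = [m][m−1]⋯[1]`. -/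
def qfact (m : ℕ) : F := ∏ i ∈ Finset.range m, qint ((i : ℤ) + 1)

/-- The Gaussian binomial `[r; s] = [r][r−1]⋯[r−s+1]/[s]!`. -/
def qbinom (r : ℤ) (s : ℕ) : F := (∏ i ∈ Finset.range s, qint (r - (i : ℤ))) / qfact s

/-- Generators `e, f, K₁, K₁', K₂, K₂'`. -/
inductive Gen | e | f | K1 | K1' | K2 | K2'

def gen (x : Gen) : FreeAlgebra F Gen := FreeAlgebra.ι F x

/-- The defining relations of `B_d`. -/
inductive BRel (d : ℕ) : FreeAlgebra F Gen → FreeAlgebra F Gen → Prop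
  | comm : BRel d (gen .K1 * gen .K2) (gen .K2 * gen .K1)
  | K1K1' : BRel d (gen .K1 * gen .K1') 1
  | K1'K1 : BRel d (gen .K1' * gen .K1) 1
  | K2K2' : BRel d (gen .K2 * gen .K2') 1
  | K2'K2 : BRel d (gen .K2' * gen .K2) 1
  | K1e : BRel d (gen .K1 * gen .e * gen .K1') (v • gen .e)
  | K1f : BRel d (gen .K1 * gen .f * gen .K1') (v⁻¹ • gen .f)
  | K2e : BRel d (gen .K2 * gen .e * gen .K2') (v⁻¹ • gen .e)
  | K2f : BRel d (gen .K2 * gen .f * gen .K2') (v • gen .f)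
  | ef : BRel d (gen .e * gen .f - gen .f * gen .e)
      ((v - v⁻¹)⁻¹ • (gen .K1 * gen .K2' - gen .K1' * gen .K2))
  | KK : BRel d (gen .K1 * gen .K2) ((v ^ d) • 1)
  | minp : BRel d (((List.range (d + 1)).map
      (fun i => gen .K1 - algebraMap F (FreeAlgebra F Gen) (v ^ i))).prod) 0

/-- The algebra `B_d`: quotient of the free algebra by the relations above. -/
def B (d : ℕ) : Type := RingQuot (BRel d)

instance (d : ℕ) : Ring (B d) := inferInstanceAs (Ring (RingQuot (BRel d)))
instance (d : ℕ) : Algebra F (B d) := inferInstanceAs (Algebra F (RingQuot (BRel d)))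

/-- The image of `e` in `B_d`. -/
def bE (d : ℕ) : B d := RingQuot.mkAlgHom F (BRel d) (gen .e)
/-- The image of `f` in `B_d`. -/
def bF (d : ℕ) : B d := RingQuot.mkAlgHom F (BRel d) (gen .f)
/-- The image of `K₁` in `B_d`. -/
def bK1 (d : ℕ) : B d := RingQuot.mkAlgHom F (BRel d) (gen .K1)
/-- The image of `K₁⁻¹` in `B_d`. -/
def bK1' (d : ℕ) : B d := RingQuot.mkAlgHom F (BRel d) (gen .K1')
/-- The image of `K₂` in `B_d`. -/
def bK2 (d : ℕ) : B d := RingQuot.mkAlgHom F (BRel d) (gen .K2)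
/-- The image of `K₂⁻¹` in `B_d`. -/
def bK2' (d : ℕ) : B d := RingQuot.mkAlgHom F (BRel d) (gen .K2')

/-- `[X; c; t] = ∏_{i=1}^{t} (X·v^{c−i+1} − X⁻¹·v^{−c+i−1})/(v^i − v^{−i})`,
for an invertible `X` with inverse `Xinv`. -/
def qK {A : Type} [Ring A] [Algebra F A] (X Xinv : A) (c : ℤ) (t : ℕ) : A :=
  ((List.range t).map (fun i =>
     (v ^ ((i : ℤ) + 1) - v ^ (-((i : ℤ) + 1)))⁻¹ •
       (v ^ (c - (i : ℤ)) • X - v ^ ((i : ℤ) - c) • Xinv))).prod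

/-- `K_{b₁,b₂} = [K₁; b₁]·[K₂; b₂] ∈ B_d`. -/
def Kbox (d : ℕ) (b₁ b₂ : ℕ) : B d :=
  qK (bK1 d) (bK1' d) 0 b₁ * qK (bK2 d) (bK2' d) 0 b₂

/-- The divided power `e^{(m)} = e^m/[m]!`. -/
def eD (d : ℕ) (m : ℕ) : B d := (qfact m)⁻¹ • (bE d) ^ m

/-- The divided power `f^{(m)} = f^m/[m]!`. -/
def fD (d : ℕ) (m : ℕ) : B d := (qfact m)⁻¹ • (bF d) ^ m


/-! ### Auxiliary material for the proof -/

open LaurentPolynomial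

lemma v_ne : (v : F) ≠ 0 := RatFunc.X_ne_zero

lemma list_prod_range' {M : Type*} [CommMonoid M] (f : ℕ → M) (n : ℕ) :
    ((List.range n).map f).prod = ∏ i ∈ Finset.range n, f i := by
  induction n with
  | zero => simp
  | succ n ih =>
    rw [List.range_succ, List.map_append, List.prod_append, Finset.prod_range_succ, ih]; simp

/-- `qK` in a commutative algebra, as a `Finset.prod`. -/
lemma qK_eq_prod {A : Type} [CommRing A] [Algebra F A] (X Y : A) (c : ℤ) (t : ℕ) :
    qK X Y c t = ∏ i ∈ Finset.range t,
      ((v ^ ((i : ℤ) + 1) - v ^ (-((i : ℤ) + 1)))⁻¹ •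
        (v ^ (c - (i : ℤ)) • X - v ^ ((i : ℤ) - c) • Y)) := by
  rw [qK]
  simp only [bind_pure_comp, List.map_eq_map, List.map_map]
  exact list_prod_range' _ _

lemma smul_dvd'' {A : Type*} [Ring A] [Algebra F A] (c : F) {x y : A} (h : x ∣ y) :
    x ∣ c • y := by
  obtain ⟨w, rfl⟩ := h
  exact ⟨c • w, (mul_smul_comm c x w).symm⟩

lemma laurent_key (a : F) :
    ((T 1 : LaurentPolynomial F) - C a) * (T (-1) * (T 1 + C a))
      = T 1 - (a * a) • T (-1) := by
  have h : (T 1 : LaurentPolynomial F) * T (-1) = 1 := by rw [← T_add]; simp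
  rw [Algebra.smul_def, ← C_eq_algebraMap, map_mul]
  linear_combination (T 1 : LaurentPolynomial F) * h

lemma factorJ (j : ℤ) :
    ((T 1 : LaurentPolynomial F) - C (v ^ j)) ∣ (v ^ (-j) • T 1 - v ^ j • T (-1)) := by
  refine ⟨v ^ (-j) • (T (-1) * (T 1 + C (v ^ j))), ?_⟩
  rw [mul_smul_comm, laurent_key, smul_sub, smul_smul]
  congr 2
  rw [← zpow_add₀ v_ne, ← zpow_add₀ v_ne]
  congr 1
  omega

lemma factorB (d i : ℕ) :
    ((T 1 : LaurentPolynomial F) - C (v ^ ((d : ℤ) - i))) ∣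
      (v ^ ((0 : ℤ) - (i : ℤ)) • ((v : F) ^ (d : ℤ) • T (-1))
        - v ^ ((i : ℤ) - 0) • (v ^ (-(d : ℤ)) • (T 1 : LaurentPolynomial F))) := by
  have e1 : ((0 : ℤ) - (i : ℤ)) + (d : ℤ) = (d : ℤ) - i := by ring
  have e2 : ((i : ℤ) - 0) + -(d : ℤ) = -((d : ℤ) - i) := by ring
  have heq : (v ^ ((0 : ℤ) - (i : ℤ)) • ((v : F) ^ (d : ℤ) • T (-1))
        - v ^ ((i : ℤ) - 0) • (v ^ (-(d : ℤ)) • (T 1 : LaurentPolynomial F)))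
      = -(v ^ (-((d : ℤ) - i)) • T 1 - v ^ ((d : ℤ) - i) • T (-1)) := by
    rw [smul_smul, smul_smul, ← zpow_add₀ v_ne, ← zpow_add₀ v_ne, e1, e2]
    exact (neg_sub _ _).symm
  rw [heq, dvd_neg]
  exact factorJ _

lemma M_dvd (d b₁ b₂ : ℕ) (h : d + 1 ≤ b₁ + b₂) :
    (((List.range (d + 1)).map
        (fun j : ℕ => (T 1 : LaurentPolynomial F) - C (v ^ (j : ℤ)))).prod) ∣
      qK (T 1 : LaurentPolynomial F) (T (-1)) 0 b₁ *
        qK ((v : F) ^ (d : ℤ) • T (-1) : LaurentPolynomial F) (v ^ (-(d : ℤ)) • T 1) 0 b₂ := by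
  rw [qK_eq_prod, qK_eq_prod, list_prod_range']
  set m := min b₁ (d + 1) with hm
  have hdm : d + 1 = m + (d + 1 - m) := by omega
  rw [hdm, Finset.prod_range_add]
  apply mul_dvd_mul
  · have h1 : (∏ j ∈ Finset.range m, ((T 1 : LaurentPolynomial F) - C (v ^ (j : ℤ)))) ∣
        ∏ j ∈ Finset.range m,
          ((v ^ ((j : ℤ) + 1) - v ^ (-((j : ℤ) + 1)))⁻¹ •
            (v ^ ((0 : ℤ) - (j : ℤ)) • (T 1 : LaurentPolynomial F)
              - v ^ ((j : ℤ) - (0 : ℤ)) • T (-1))) := by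
      apply Finset.prod_dvd_prod_of_dvd
      intro j _
      apply smul_dvd''
      simp only [zero_sub, sub_zero]
      exact factorJ _
    exact h1.trans (Finset.prod_dvd_prod_of_subset _ _ _
      (Finset.range_subset_range.2 (by omega)))
  · set n := d + 1 - m with hn
    have hrefl : (∏ j ∈ Finset.range n,
          ((T 1 : LaurentPolynomial F) - C (v ^ ((m + j : ℕ) : ℤ))))
        = ∏ j ∈ Finset.range n,
          ((T 1 : LaurentPolynomial F) - C (v ^ ((d - j : ℕ) : ℤ))) := by
      rw [← Finset.prod_range_reflect
        (fun j => (T 1 : LaurentPolynomial F) - C (v ^ ((d - j : ℕ) : ℤ))) n]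
      apply Finset.prod_congr rfl
      intro j hj
      simp only [Finset.mem_range] at hj
      have hmn : m + j = d - (n - 1 - j) := by omega
      rw [hmn]
    rw [hrefl]
    have h2 : (∏ j ∈ Finset.range n,
          ((T 1 : LaurentPolynomial F) - C (v ^ ((d - j : ℕ) : ℤ)))) ∣
        ∏ j ∈ Finset.range n,
          ((v ^ ((j : ℤ) + 1) - v ^ (-((j : ℤ) + 1)))⁻¹ •
            (v ^ ((0 : ℤ) - (j : ℤ)) • ((v : F) ^ (d : ℤ) • T (-1))
              - v ^ ((j : ℤ) - (0 : ℤ)) • (v ^ (-(d : ℤ)) • (T 1 : LaurentPolynomial F)))) := by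
      apply Finset.prod_dvd_prod_of_dvd
      intro j hj
      simp only [Finset.mem_range] at hj
      apply smul_dvd''
      have hn' : n ≤ d + 1 := by rw [hn]; omega
      have hjd : j ≤ d := by omega
      have hcast : ((d - j : ℕ) : ℤ) = (d : ℤ) - j := by omega
      rw [hcast]
      exact factorB d j
    exact h2.trans (Finset.prod_dvd_prod_of_subset _ _ _
      (Finset.range_subset_range.2 (by omega)))

lemma map_qK {A A' : Type} [Ring A] [Algebra F A] [Ring A'] [Algebra F A']
    (ψ : A →ₐ[F] A') (X Y : A) (c : ℤ) (t : ℕ) :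
    ψ (qK X Y c t) = qK (ψ X) (ψ Y) c t := by
  rw [qK, qK, map_list_prod, List.map_map]
  congr 1
  apply List.map_congr_left
  intro i _
  simp [Function.comp_def, map_smul, map_sub]

lemma bK1_mul_bK1' (d : ℕ) : bK1 d * bK1' d = 1 := by
  have h := RingQuot.mkAlgHom_rel F (BRel.K1K1' (d := d))
  simp only [map_mul, map_one] at h; exact h

lemma bK1'_mul_bK1 (d : ℕ) : bK1' d * bK1 d = 1 := by
  have h := RingQuot.mkAlgHom_rel F (BRel.K1'K1 (d := d))
  simp only [map_mul, map_one] at h; exact h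

lemma bK2_mul_bK2' (d : ℕ) : bK2 d * bK2' d = 1 := by
  have h := RingQuot.mkAlgHom_rel F (BRel.K2K2' (d := d))
  simp only [map_mul, map_one] at h; exact h

lemma bK1_mul_bK2 (d : ℕ) : bK1 d * bK2 d = (v ^ d : F) • 1 := by
  have h := RingQuot.mkAlgHom_rel F (BRel.KK (d := d))
  simp only [map_mul, map_smul, map_one] at h; exact h

lemma bK2_eq (d : ℕ) : bK2 d = (v ^ d : F) • bK1' d := by
  have h := congrArg (fun x => bK1' d * x) (bK1_mul_bK2 d)
  simp only [← mul_assoc, bK1'_mul_bK1, one_mul, mul_smul_comm, mul_one] at h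
  exact h

lemma bK2'_eq (d : ℕ) : bK2' d = ((v ^ d : F))⁻¹ • bK1 d := by
  have h1 : ((v ^ d : F))⁻¹ • bK1 d * bK2 d = 1 := by
    rw [smul_mul_assoc, bK1_mul_bK2, smul_smul, inv_mul_cancel₀ (pow_ne_zero d v_ne), one_smul]
  calc bK2' d = 1 * bK2' d := (one_mul _).symm
    _ = (((v ^ d : F))⁻¹ • bK1 d * bK2 d) * bK2' d := by rw [h1]
    _ = ((v ^ d : F))⁻¹ • bK1 d * (bK2 d * bK2' d) := by rw [mul_assoc]
    _ = ((v ^ d : F))⁻¹ • bK1 d := by rw [bK2_mul_bK2', mul_one]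

lemma minp_eq_zero (d : ℕ) :
    ((List.range (d + 1)).map
      (fun i => bK1 d - algebraMap F (B d) (v ^ i))).prod = 0 := by
  have h := RingQuot.mkAlgHom_rel F (BRel.minp (d := d))
  simp only [map_list_prod, List.map_map, Function.comp_def, map_sub, AlgHom.commutes,
    map_zero] at h; exact h

/-- `K₁` as a unit of `B d`. -/
def uK (d : ℕ) : (B d)ˣ where
  val := bK1 d
  inv := bK1' d
  val_inv := bK1_mul_bK1' d
  inv_val := bK1'_mul_bK1 d

/-- The evaluation map `F[T,T⁻¹] → B d` sending `T` to `K₁`. -/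
def φ (d : ℕ) : LaurentPolynomial F →ₐ[F] B d :=
  AddMonoidAlgebra.lift F (B d) ℤ ((Units.coeHom (B d)).comp (zpowersHom (B d)ˣ (uK d)))

lemma φ_T (d : ℕ) (n : ℤ) : φ d (T n) = ((uK d ^ n : (B d)ˣ) : B d) := by
  rw [φ, T, AddMonoidAlgebra.lift_single]
  simp [zpowersHom_apply]

lemma φ_T1 (d : ℕ) : φ d (T 1) = bK1 d := by rw [φ_T, zpow_one]; rfl

lemma φ_Tneg1 (d : ℕ) : φ d (T (-1)) = bK1' d := by
  rw [φ_T, zpow_neg_one]; rfl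

lemma φ_C (d : ℕ) (r : F) : φ d (C r) = algebraMap F (B d) r := by
  rw [C_eq_algebraMap]; exact AlgHom.commutes _ _


/-- `[K₁; b₁]·[K₂; b₂] = 0` in `B_d` whenever `b₁ + b₂ ≥ d + 1`. -/
theorem stmt10 (d : ℕ) (b₁ b₂ : ℕ) (h : d + 1 ≤ b₁ + b₂) :
    qK (bK1 d) (bK1' d) 0 b₁ * qK (bK2 d) (bK2' d) 0 b₂ = 0 := by
  obtain ⟨Q, hQ⟩ := M_dvd d b₁ b₂ h
  have hmap := congrArg (φ d) hQ
  rw [map_mul, map_mul, map_qK, map_qK, map_smul, map_smul, φ_T1, φ_Tneg1,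
    map_list_prod, List.map_map] at hmap
  have hz : ((List.range (d + 1)).map
      ((φ d) ∘ fun j : ℕ => (T 1 : LaurentPolynomial F) - C (v ^ (j : ℤ)))).prod = 0 := by
    have hfun : ((φ d) ∘ fun j : ℕ => (T 1 : LaurentPolynomial F) - C (v ^ (j : ℤ)))
        = fun i : ℕ => bK1 d - algebraMap F (B d) (v ^ i) := by
      funext i
      simp [Function.comp_def, map_sub, φ_T1, φ_C, zpow_natCast]
    rw [hfun, minp_eq_zero]
  rw [hz, zero_mul] at hmap
  have h2 : qK (bK2 d) (bK2' d) 0 b₂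
      = qK ((v : F) ^ (d : ℤ) • bK1' d) ((v : F) ^ (-(d : ℤ)) • bK1 d) 0 b₂ := by
    rw [bK2_eq, bK2'_eq, zpow_natCast, zpow_neg, zpow_natCast]
  rw [h2, ← hmap]
end
end

section
/- Suppose b₁, b₂, a ∈ ℕ with b₁ + b₂ = d. Then in B_d: (i) f^a·K_{b₁,b₂} = K_{b₁−a, b₂+a}·f^a if a ≤ b₁, and f^a·K_{b₁,b₂} = 0 if a > b₁; (ii) K_{b₁,b₂}·f^a = f^a·K_{b₁+a, b₂−a} if a ≤ b₂, and K_{b₁,b₂}·f^a = 0 if a > b₂. -/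
noncomputable section

namespace S14

open Polynomial

lemma v_ne_zero : (v : F) ≠ 0 := RatFunc.X_ne_zero

lemma v_pow_ne_one {k : ℕ} (hk : k ≠ 0) : (v : F) ^ k ≠ 1 := by
  intro h
  have h2 : algebraMap (Polynomial ℚ) (RatFunc ℚ) (Polynomial.X ^ k) =
      algebraMap (Polynomial ℚ) (RatFunc ℚ) 1 := by
    simpa [map_pow, RatFunc.algebraMap_X, v] using h
  have h3 : (Polynomial.X : Polynomial ℚ) ^ k = 1 := RatFunc.algebraMap_injective ℚ h2
  have := congrArg Polynomial.natDegree h3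
  simp [Polynomial.natDegree_X_pow] at this
  exact hk this

lemma v_zpow_inj : Function.Injective (fun m : ℤ => (v : F) ^ m) := by
  have key : ∀ k : ℤ, (v : F) ^ k = 1 → k = 0 := by
    intro k hk
    by_contra h0
    rcases lt_or_gt_of_ne h0 with hneg | hpos
    · have : (v : F) ^ (-k) = 1 := by
        rw [zpow_neg, hk, inv_one]
      have hmk : (0:ℤ) < -k := by omega
      have : (v : F) ^ ((-k).toNat) = 1 := by
        rw [← zpow_natCast, Int.toNat_of_nonneg hmk.le]; exact this
      exact v_pow_ne_one (by omega) this
    · have : (v : F) ^ (k.toNat) = 1 := by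
        rw [← zpow_natCast, Int.toNat_of_nonneg hpos.le]; exact hk
      exact v_pow_ne_one (by omega) this
  intro m n h
  simp only at h
  have : (v : F) ^ (m - n) = 1 := by
    rw [zpow_sub₀ v_ne_zero, h, div_self (zpow_ne_zero _ v_ne_zero)]
  have := key _ this
  omega

lemma v_zpow_ne {m n : ℤ} (h : m ≠ n) : (v : F) ^ m ≠ (v : F) ^ n :=
  fun hc => h (v_zpow_inj hc)

lemma v_sub_ne {m n : ℤ} (h : m ≠ n) : (v : F) ^ m - (v : F) ^ n ≠ 0 :=
  sub_ne_zero.2 (v_zpow_ne h)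

/-- the scalar `g m t = ∏_{i<t} (v^{m-i} - v^{i-m})/(v^{i+1}-v^{-i-1})`. -/
def g (m : ℤ) (t : ℕ) : F :=
  ∏ i ∈ Finset.range t,
    (((v:F) ^ ((i:ℤ)+1) - (v:F) ^ (-((i:ℤ)+1)))⁻¹ * ((v:F) ^ (m - (i:ℤ)) - (v:F) ^ ((i:ℤ) - m)))

lemma g_eq_zero {m : ℤ} {t : ℕ} (h0 : 0 ≤ m) (ht : m < t) : g m t = 0 := by
  apply Finset.prod_eq_zero (i := m.toNat)
  · simp only [Finset.mem_range]; omega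
  · have : ((m.toNat : ℕ) : ℤ) = m := Int.toNat_of_nonneg h0
    rw [this]
    simp

lemma g_diag (t : ℕ) : g (t : ℤ) t = 1 := by
  unfold g
  rw [Finset.prod_mul_distrib, Finset.prod_inv_distrib]
  have hrefl : ∏ i ∈ Finset.range t, ((v:F) ^ (((t:ℤ)) - (i:ℤ)) - (v:F) ^ ((i:ℤ) - (t:ℤ)))
      = ∏ i ∈ Finset.range t, ((v:F) ^ ((i:ℤ)+1) - (v:F) ^ (-((i:ℤ)+1))) := by
    rw [← Finset.prod_range_reflect (fun i => ((v:F) ^ ((i:ℤ)+1) - (v:F) ^ (-((i:ℤ)+1)))) t]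
    apply Finset.prod_congr rfl
    intro i hi
    rw [Finset.mem_range] at hi
    have h1 : ((t - 1 - i : ℕ) : ℤ) + 1 = (t:ℤ) - (i:ℤ) := by omega
    rw [h1]
    congr 1
    congr 1
    omega
  rw [hrefl, inv_mul_cancel₀]
  rw [Finset.prod_ne_zero_iff]
  intro i _
  exact v_sub_ne (by omega)

end S14
namespace S14
open Polynomial

variable (d : ℕ)

/-- relation extraction -/
lemma brel {x y : FreeAlgebra F Gen} (h : BRel d x y) :
    RingQuot.mkAlgHom F (BRel d) x = RingQuot.mkAlgHom F (BRel d) y :=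
  RingQuot.mkAlgHom_rel F h

lemma K1K1' : bK1 d * bK1' d = 1 := by
  have := brel d (BRel.K1K1' (d := d))
  simp only [map_mul, map_one, bK1, bK1'] at this ⊢; exact this

lemma K1'K1 : bK1' d * bK1 d = 1 := by
  have := brel d (BRel.K1'K1 (d := d))
  simp only [map_mul, map_one, bK1, bK1'] at this ⊢; exact this

lemma K2K2' : bK2 d * bK2' d = 1 := by
  have := brel d (BRel.K2K2' (d := d))
  simp only [map_mul, map_one, bK2, bK2'] at this ⊢; exact this

lemma K1fK1' : bK1 d * bF d * bK1' d = v⁻¹ • bF d := by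
  have := brel d (BRel.K1f (d := d))
  simp only [map_mul, map_smul, bK1, bK1', bF] at this ⊢; exact this

lemma KKrel : bK1 d * bK2 d = (v ^ d : F) • 1 := by
  have := brel d (BRel.KK (d := d))
  simp only [map_mul, map_smul, map_one, bK1, bK2] at this ⊢; exact this

lemma K1f : bK1 d * bF d = v⁻¹ • (bF d * bK1 d) := by
  calc bK1 d * bF d = bK1 d * bF d * (bK1' d * bK1 d) := by rw [K1'K1, mul_one]
    _ = (bK1 d * bF d * bK1' d) * bK1 d := by simp only [mul_assoc]
    _ = (v⁻¹ • bF d) * bK1 d := by rw [K1fK1']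
    _ = v⁻¹ • (bF d * bK1 d) := smul_mul_assoc _ _ _

lemma fK1 : bF d * bK1 d = v • (bK1 d * bF d) := by
  have h := K1f d
  calc bF d * bK1 d = (v * v⁻¹) • (bF d * bK1 d) := by
        rw [mul_inv_cancel₀ v_ne_zero, one_smul]
    _ = v • (v⁻¹ • (bF d * bK1 d)) := by rw [smul_smul]
    _ = v • (bK1 d * bF d) := by rw [← h]

lemma L_eq : bK2 d = (v ^ d : F) • bK1' d := by
  calc bK2 d = (bK1' d * bK1 d) * bK2 d := by rw [K1'K1, one_mul]
    _ = bK1' d * (bK1 d * bK2 d) := by rw [mul_assoc]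
    _ = bK1' d * ((v ^ d : F) • 1) := by rw [KKrel]
    _ = (v ^ d : F) • bK1' d := by rw [mul_smul_comm, mul_one]

lemma L'_eq : bK2' d = ((v : F) ^ d)⁻¹ • bK1 d := by
  have h1 : ((v:F) ^ d • bK1' d) * bK2' d = 1 := by rw [← L_eq, K2K2']
  have h2 : bK1' d * bK2' d = ((v:F) ^ d)⁻¹ • 1 := by
    have h3 : ((v:F)^d)⁻¹ • (((v:F) ^ d • bK1' d) * bK2' d) = ((v:F)^d)⁻¹ • (1 : B d) := by
      rw [h1]
    rw [smul_mul_assoc, smul_smul, inv_mul_cancel₀ (pow_ne_zero _ v_ne_zero), one_smul] at h3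
    exact h3
  calc bK2' d = (bK1 d * bK1' d) * bK2' d := by rw [K1K1', one_mul]
    _ = bK1 d * (bK1' d * bK2' d) := by rw [mul_assoc]
    _ = bK1 d * (((v:F) ^ d)⁻¹ • 1) := by rw [h2]
    _ = ((v : F) ^ d)⁻¹ • bK1 d := by rw [mul_smul_comm, mul_one]

/-- the minimal polynomial of `K₁`. -/
def Pd : F[X] := ∏ i ∈ Finset.range (d+1), (X - C ((v:F) ^ (i:ℤ)))

/-- evaluation of polynomials at `K₁`. -/
def aK : F[X] →ₐ[F] B d := Polynomial.aeval (bK1 d)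

lemma aK_list_prod (n : ℕ) (p : ℕ → F[X]) :
    aK d (∏ i ∈ Finset.range n, p i) = ((List.range n).map (fun i => aK d (p i))).prod := by
  induction n with
  | zero => simp
  | succ n ih =>
    rw [Finset.prod_range_succ, map_mul, ih, List.range_succ, List.map_append,
      List.prod_append]
    simp

lemma aK_Pd : aK d (Pd d) = 0 := by
  have hrel := brel d (BRel.minp (d := d))
  rw [map_zero, map_list_prod, List.map_map] at hrel
  rw [Pd, aK_list_prod]
  rw [show (0 : B d) = _ from hrel.symm]
  congr 1
  apply List.map_congr_left
  intro i _
  simp only [Function.comp_apply, map_sub, AlgHom.commutes]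
  rw [aK]
  simp only [Polynomial.aeval_X, Polynomial.aeval_C, map_sub]
  rw [zpow_natCast]
  rfl

lemma Pd_root {m : ℕ} (hm : m ≤ d) : (Pd d).eval ((v:F) ^ (m:ℤ)) = 0 := by
  rw [Pd, eval_prod]
  apply Finset.prod_eq_zero (i := m)
  · simp only [Finset.mem_range]; omega
  · simp

lemma c0_ne : (Pd d).coeff 0 ≠ 0 := by
  rw [coeff_zero_eq_eval_zero, Pd, eval_prod]
  rw [Finset.prod_ne_zero_iff]
  intro i _
  simp only [eval_sub, eval_X, eval_C]
  rw [zero_sub, neg_ne_zero]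
  exact zpow_ne_zero _ v_ne_zero

/-- a polynomial representing `K₁⁻¹`. -/
def invP : F[X] := (-((Pd d).coeff 0)⁻¹) • (Pd d).divX

lemma K_mul_aK_invP : bK1 d * aK d (invP d) = 1 := by
  have hdiv : bK1 d * aK d ((Pd d).divX) = -(((Pd d).coeff 0) • 1) := by
    have h1 : aK d (X * (Pd d).divX + C ((Pd d).coeff 0)) = aK d (Pd d) := by
      rw [Polynomial.X_mul_divX_add]
    rw [map_add, map_mul, aK_Pd] at h1
    have h2 : aK d X = bK1 d := by rw [aK]; simp
    rw [h2] at h1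
    have h3 : aK d (C ((Pd d).coeff 0)) = ((Pd d).coeff 0) • 1 := by
      rw [aK]; simp [Algebra.smul_def]
    rw [h3] at h1
    exact eq_neg_of_add_eq_zero_left h1
  rw [invP, map_smul, mul_smul_comm, hdiv, smul_neg, neg_smul, neg_neg, smul_smul,
    inv_mul_cancel₀ (c0_ne d), one_smul]

lemma aK_invP : aK d (invP d) = bK1' d := by
  calc aK d (invP d) = (bK1' d * bK1 d) * aK d (invP d) := by rw [K1'K1, one_mul]
    _ = bK1' d * (bK1 d * aK d (invP d)) := by rw [mul_assoc]
    _ = bK1' d := by rw [K_mul_aK_invP, mul_one]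

lemma invP_eval {m : ℕ} (hm : m ≤ d) : (invP d).eval ((v:F) ^ (m:ℤ)) = (v:F) ^ (-(m:ℤ)) := by
  set w : F := (v:F) ^ (m:ℤ) with hw
  have hwne : w ≠ 0 := zpow_ne_zero _ v_ne_zero
  have h1 : w * ((Pd d).divX.eval w) + (Pd d).coeff 0 = 0 := by
    have h := congrArg (Polynomial.eval w) (Polynomial.X_mul_divX_add (Pd d))
    rw [eval_add, eval_mul, eval_X, eval_C, Pd_root d hm] at h
    exact h
  have h2 : (Pd d).divX.eval w = -((Pd d).coeff 0) / w := by
    rw [eq_div_iff hwne]; linear_combination h1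
  rw [zpow_neg, ← hw, invP, eval_smul, h2, smul_eq_mul]
  field_simp
  exact div_self (c0_ne d)

end S14
namespace S14
open Polynomial

variable (d : ℕ)

/-- polynomial representing `[K₁; c; t]`. -/
def qk (c : ℤ) (t : ℕ) : F[X] :=
  ∏ i ∈ Finset.range t,
    (((v:F) ^ ((i:ℤ)+1) - (v:F) ^ (-((i:ℤ)+1)))⁻¹ •
      ((v:F) ^ (c - (i:ℤ)) • X - (v:F) ^ ((i:ℤ) - c) • invP d))

/-- polynomial representing `[K₂; c; t]`. -/
def qk2 (c : ℤ) (t : ℕ) : F[X] :=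
  ∏ i ∈ Finset.range t,
    (((v:F) ^ ((i:ℤ)+1) - (v:F) ^ (-((i:ℤ)+1)))⁻¹ •
      ((v:F) ^ (c - (i:ℤ) + (d:ℤ)) • invP d - (v:F) ^ ((i:ℤ) - c - (d:ℤ)) • X))

lemma range_cast_eq_map (t : ℕ) :
    (do let a ← List.range t; pure ((a:ℤ))) = (List.range t).map (fun a : ℕ => (a:ℤ)) := by
  induction t with
  | zero => rfl
  | succ n ih => rw [List.range_succ]; simp_all

lemma aK_qk (c : ℤ) (t : ℕ) : aK d (qk d c t) = qK (bK1 d) (bK1' d) c t := by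
  rw [qk, aK_list_prod, qK, range_cast_eq_map, List.map_map]
  congr 1
  apply List.map_congr_left
  intro i _
  simp only [Function.comp_apply]
  rw [map_smul, map_sub, map_smul, map_smul, aK_invP]
  rw [aK]
  simp only [Polynomial.aeval_X]

lemma aK_qk2 (c : ℤ) (t : ℕ) : aK d (qk2 d c t) = qK (bK2 d) (bK2' d) c t := by
  rw [qk2, aK_list_prod, qK, range_cast_eq_map, List.map_map]
  congr 1
  apply List.map_congr_left
  intro i _
  simp only [Function.comp_apply]
  rw [map_smul, map_sub, map_smul, map_smul, aK_invP]
  have h1 : aK d X = bK1 d := by rw [aK]; simp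
  rw [h1, L_eq, L'_eq, smul_smul, smul_smul]
  have e1 : (v:F) ^ (c - (i:ℤ) + (d:ℤ)) = (v:F) ^ (c - (i:ℤ)) * (v:F) ^ d := by
    rw [← zpow_natCast (v:F) d, ← zpow_add₀ v_ne_zero]
  have e2 : (v:F) ^ ((i:ℤ) - c - (d:ℤ)) = (v:F) ^ ((i:ℤ) - c) * ((v:F) ^ d)⁻¹ := by
    rw [← zpow_natCast (v:F) d, ← zpow_neg, ← zpow_add₀ v_ne_zero, sub_eq_add_neg]
  rw [e1, e2]

lemma Kbox_eq (b₁ b₂ : ℕ) : Kbox d b₁ b₂ = aK d (qk d 0 b₁ * qk2 d 0 b₂) := by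
  rw [Kbox, map_mul, aK_qk, aK_qk2]

lemma qk_eval (c : ℤ) (t : ℕ) {m : ℕ} (hm : m ≤ d) :
    (qk d c t).eval ((v:F) ^ (m:ℤ)) = g (c + m) t := by
  rw [qk, eval_prod, g]
  apply Finset.prod_congr rfl
  intro i _
  rw [eval_smul, eval_sub, eval_smul, eval_smul, eval_X, invP_eval d hm,
    smul_eq_mul, smul_eq_mul, smul_eq_mul]
  rw [← zpow_add₀ v_ne_zero, ← zpow_add₀ v_ne_zero]
  congr 2 <;> ring

lemma qk2_eval (c : ℤ) (t : ℕ) {m : ℕ} (hm : m ≤ d) :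
    (qk2 d c t).eval ((v:F) ^ (m:ℤ)) = g (c + d - m) t := by
  rw [qk2, eval_prod, g]
  apply Finset.prod_congr rfl
  intro i _
  rw [eval_smul, eval_sub, eval_smul, eval_smul, eval_X, invP_eval d hm,
    smul_eq_mul, smul_eq_mul, smul_eq_mul]
  rw [← zpow_add₀ v_ne_zero, ← zpow_add₀ v_ne_zero]
  congr 2 <;> ring

end S14
namespace S14
open Polynomial

variable (d : ℕ)

/-- the twist `p(X) ↦ p(v^a · X)`. -/
def twA (a : ℕ) : F[X] →ₐ[F] F[X] := Polynomial.aeval (C ((v:F) ^ a) * X)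

lemma tw_eval (a : ℕ) (p : F[X]) (m : ℕ) :
    (twA a p).eval ((v:F) ^ (m:ℤ)) = p.eval ((v:F) ^ (((a + m : ℕ)):ℤ)) := by
  rw [twA, ← comp_eq_aeval, eval_comp, eval_mul, eval_C, eval_X]
  have h : (((a + m : ℕ)):ℤ) = (a:ℤ) + (m:ℤ) := by push_cast; ring
  rw [h, zpow_add₀ v_ne_zero]
  norm_cast

lemma fK1_pow (n : ℕ) : bF d * bK1 d ^ n = ((v:F) ^ n) • (bK1 d ^ n * bF d) := by
  induction n with
  | zero => simp
  | succ n ih =>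
    rw [pow_succ, ← mul_assoc, ih, smul_mul_assoc, mul_assoc, fK1, mul_smul_comm,
      smul_smul, ← mul_assoc, ← pow_succ, pow_succ (v:F)]

lemma fpow_K1_pow (a n : ℕ) :
    bF d ^ a * bK1 d ^ n = ((v:F) ^ (a * n)) • (bK1 d ^ n * bF d ^ a) := by
  induction a with
  | zero => simp
  | succ a ih =>
    rw [pow_succ, mul_assoc, fK1_pow, mul_smul_comm, ← mul_assoc, ih, smul_mul_assoc,
      smul_smul, mul_assoc]
    congr 1
    rw [← pow_add]
    congr 1
    ring

lemma f_aK (a : ℕ) (p : F[X]) :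
    bF d ^ a * aK d p = aK d (twA a p) * bF d ^ a := by
  induction p using Polynomial.induction_on' with
  | add p q ihp ihq => rw [map_add, map_add, map_add, mul_add, add_mul, ihp, ihq]
  | monomial n c =>
    rw [twA, Polynomial.aeval_monomial]
    have h1 : aK d ((algebraMap F F[X]) c * (C ((v:F) ^ a) * X) ^ n)
        = c • (((v:F) ^ a) ^ n • bK1 d ^ n) := by
      rw [map_mul, map_pow, map_mul]
      have : aK d X = bK1 d := by rw [aK]; simp
      rw [this]
      have h2 : aK d ((algebraMap F F[X]) c) = (algebraMap F (B d)) c := by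
        rw [aK]; simp
      have h3 : aK d (C ((v:F) ^ a)) = (algebraMap F (B d)) ((v:F) ^ a) := by
        rw [aK]; simp
      rw [h2, h3, ← Algebra.smul_def, ← Algebra.smul_def, _root_.smul_pow]
    rw [h1]
    have h4 : aK d (monomial n c) = c • bK1 d ^ n := by
      rw [aK, Polynomial.aeval_monomial, ← Algebra.smul_def]
    rw [h4, mul_smul_comm, fpow_K1_pow]
    simp only [smul_smul, smul_mul_assoc]
    congr 1
    rw [← pow_mul]

/-- the key kill lemma for `a ≤ d + 1`. -/
lemma kill_le (a : ℕ) (ha : a ≤ d + 1) (q : F[X])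
    (hq : ∀ m ∈ Finset.range (d + 1 - a), q.IsRoot ((v:F) ^ (m:ℤ))) :
    aK d q * bF d ^ a = 0 := by
  classical
  set G : F[X] := ∏ i ∈ Finset.range (d+1-a), (X - C ((v:F) ^ (i:ℤ))) with hGdef
  have hinj : Function.Injective (fun i : ℕ => (v:F) ^ (i:ℤ)) := by
    intro i j h
    exact Int.natCast_inj.mp (v_zpow_inj h)
  have hGq : G ∣ q := Finset.prod_dvd_of_coprime
    ((Polynomial.pairwise_coprime_X_sub_C hinj).set_pairwise _)
    (fun i hi => (Polynomial.dvd_iff_isRoot).2 (hq i hi))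
  obtain ⟨s, hs⟩ := hGq
  set u : F := ((v:F) ^ a) ^ (d+1) with hu_def
  have hu : u ≠ 0 := pow_ne_zero _ (pow_ne_zero _ v_ne_zero)
  set H1 : F[X] := ∏ i ∈ Finset.range a, (X - C ((v:F) ^ (((d+1-a) + i : ℕ):ℤ))) with hH1
  set H2 : F[X] := ∏ i ∈ Finset.range a, (X - C ((v:F) ^ ((i:ℤ) - a))) with hH2
  have hPd : Pd d = G * H1 := by
    rw [Pd, show d + 1 = (d+1-a) + a by omega, Finset.prod_range_add]
  have hQa : twA a (Pd d) = C u * (H2 * G) := by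
    rw [Pd, map_prod]
    have hfac : ∀ i : ℕ, twA a (X - C ((v:F) ^ (i:ℤ)))
        = C ((v:F) ^ a) * (X - C ((v:F) ^ ((i:ℤ) - a))) := by
      intro i
      rw [map_sub, twA]
      simp only [Polynomial.aeval_X, Polynomial.aeval_C, Polynomial.algebraMap_eq]
      have hvv : (v:F) ^ (i:ℤ) = (v:F) ^ a * (v:F) ^ ((i:ℤ) - a) := by
        rw [← zpow_natCast (v:F) a, ← zpow_add₀ v_ne_zero]
        congr 1
        ring
      rw [mul_sub, ← C_mul, ← hvv]
    rw [Finset.prod_congr rfl (fun i _ => hfac i), Finset.prod_mul_distrib,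
      Finset.prod_const, Finset.card_range, ← C_pow, ← hu_def]
    congr 1
    rw [show d + 1 = a + (d+1-a) by omega, Finset.prod_range_add]
    congr 1
    apply Finset.prod_congr rfl
    intro i _
    congr 2
    push_cast
    ring
  have hcop : IsCoprime H1 H2 := by
    apply IsCoprime.prod_left
    intro i hi
    apply IsCoprime.prod_right
    intro j hj
    apply Polynomial.isCoprime_X_sub_C_of_isUnit_sub
    apply isUnit_iff_ne_zero.2
    apply v_sub_ne
    rw [Finset.mem_range] at hi hj
    omega
  obtain ⟨α, β, hαβ⟩ := hcop
  have hGsum : G = α * Pd d + β * (C u⁻¹ * twA a (Pd d)) := by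
    rw [hQa, hPd]
    have hCu : C u⁻¹ * C u = (1 : F[X]) := by rw [← C_mul, inv_mul_cancel₀ hu, C_1]
    calc G = (α * H1 + β * H2) * G := by rw [hαβ, one_mul]
      _ = α * (G * H1) + β * (C u⁻¹ * (C u * (H2 * G))) := by
          rw [← mul_assoc (C u⁻¹), hCu, one_mul]
          ring
  have hkQ : aK d (twA a (Pd d)) * bF d ^ a = 0 := by
    rw [← f_aK, aK_Pd, mul_zero]
  have hkG : aK d G * bF d ^ a = 0 := by
    rw [hGsum, map_add, add_mul, map_mul, map_mul, aK_Pd, mul_zero, zero_mul, zero_add,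
      map_mul, mul_assoc, mul_assoc, hkQ, mul_zero, mul_zero]
  rw [hs, mul_comm G s, map_mul, mul_assoc, hkG, mul_zero]

/-- the kill lemma for all `a`. -/
lemma kill (a : ℕ) (q : F[X])
    (hq : ∀ m ∈ Finset.range (d + 1 - a), q.IsRoot ((v:F) ^ (m:ℤ))) :
    aK d q * bF d ^ a = 0 := by
  by_cases ha : a ≤ d + 1
  · exact kill_le d a ha q hq
  · have h0 : aK d q * bF d ^ (d+1) = 0 := by
      apply kill_le d (d+1) le_rfl q
      intro m hm
      simp at hm
    rw [show a = (d+1) + (a - (d+1)) by omega, pow_add, ← mul_assoc, h0, zero_mul]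

lemma eq_of_kill (a : ℕ) (p q : F[X])
    (h : ∀ m ∈ Finset.range (d + 1 - a), (p - q).IsRoot ((v:F) ^ (m:ℤ))) :
    aK d p * bF d ^ a = aK d q * bF d ^ a := by
  have := kill d a (p - q) h
  rw [map_sub, sub_mul, sub_eq_zero] at this
  exact this

end S14
open S14 in
/-- commutation of the idempotents `K_{b₁,b₂}` with powers of `f` in `B_d`. -/
theorem stmt14 (d : ℕ) (b₁ b₂ a : ℕ) (hb : b₁ + b₂ = d) :
    (a ≤ b₁ → bF d ^ a * Kbox d b₁ b₂ = Kbox d (b₁ - a) (b₂ + a) * bF d ^ a) ∧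
    (b₁ < a → bF d ^ a * Kbox d b₁ b₂ = 0) ∧
    (a ≤ b₂ → Kbox d b₁ b₂ * bF d ^ a = bF d ^ a * Kbox d (b₁ + a) (b₂ - a)) ∧
    (b₂ < a → Kbox d b₁ b₂ * bF d ^ a = 0) := by
  refine ⟨?_, ?_, ?_, ?_⟩
  · -- (i) a ≤ b₁
    intro hab
    rw [Kbox_eq, Kbox_eq, f_aK]
    apply eq_of_kill
    intro m hm
    rw [Finset.mem_range] at hm
    have hmd : a + m ≤ d := by omega
    have hmd' : m ≤ d := by omega
    simp only [Polynomial.IsRoot]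
    rw [Polynomial.eval_sub, tw_eval, Polynomial.eval_mul, Polynomial.eval_mul,
      qk_eval d _ _ hmd, qk2_eval d _ _ hmd, qk_eval d _ _ hmd', qk2_eval d _ _ hmd']
    simp only [zero_add]
    push_cast
    rcases lt_trichotomy (a + m) b₁ with h | h | h
    · have h1 : g ((a:ℤ) + (m:ℤ)) b₁ = 0 := g_eq_zero (by omega) (by omega)
      have h2 : g ((m:ℤ)) (b₁ - a) = 0 := g_eq_zero (by omega) (by omega)
      rw [h1, h2]
      ring
    · have e2 : (d:ℤ) - ((a:ℤ) + (m:ℤ)) = ((b₂ : ℕ) : ℤ) := by omega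
      have e4 : (d:ℤ) - (m:ℤ) = (((b₂ + a : ℕ)) : ℤ) := by omega
      have e1 : (a:ℤ) + (m:ℤ) = ((b₁ : ℕ) : ℤ) := by omega
      have e3 : (m:ℤ) = (((b₁ - a : ℕ)) : ℤ) := by omega
      rw [e2, e4, e1, e3, g_diag, g_diag, g_diag, g_diag]
      ring
    · have h1 : g ((d:ℤ) - ((a:ℤ) + (m:ℤ))) b₂ = 0 := g_eq_zero (by omega) (by omega)
      have h2 : g ((d:ℤ) - (m:ℤ)) (b₂ + a) = 0 := g_eq_zero (by omega) (by omega)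
      rw [h1, h2]
      ring
  · -- (ii) b₁ < a
    intro hab
    rw [Kbox_eq, f_aK]
    apply kill
    intro m hm
    rw [Finset.mem_range] at hm
    have hmd : a + m ≤ d := by omega
    simp only [Polynomial.IsRoot]
    rw [tw_eval, Polynomial.eval_mul, qk_eval d _ _ hmd, qk2_eval d _ _ hmd]
    simp only [zero_add]
    push_cast
    have h2 : g ((d:ℤ) - ((a:ℤ) + (m:ℤ))) b₂ = 0 := g_eq_zero (by omega) (by omega)
    rw [h2, mul_zero]
  · -- (iii) a ≤ b₂
    intro hab
    rw [Kbox_eq, Kbox_eq, f_aK]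
    apply eq_of_kill
    intro m hm
    rw [Finset.mem_range] at hm
    have hmd : a + m ≤ d := by omega
    have hmd' : m ≤ d := by omega
    simp only [Polynomial.IsRoot]
    rw [Polynomial.eval_sub, tw_eval, Polynomial.eval_mul, Polynomial.eval_mul,
      qk_eval d _ _ hmd', qk2_eval d _ _ hmd', qk_eval d _ _ hmd, qk2_eval d _ _ hmd]
    simp only [zero_add]
    push_cast
    rcases lt_trichotomy m b₁ with h | h | h
    · have h1 : g ((m:ℤ)) b₁ = 0 := g_eq_zero (by omega) (by omega)
      have h2 : g ((a:ℤ) + (m:ℤ)) (b₁ + a) = 0 := g_eq_zero (by omega) (by omega)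
      rw [h1, h2]
      ring
    · have e4 : (d:ℤ) - ((a:ℤ) + (m:ℤ)) = (((b₂ - a : ℕ)) : ℤ) := by omega
      have e2 : (d:ℤ) - (m:ℤ) = ((b₂ : ℕ) : ℤ) := by omega
      have e1 : (a:ℤ) + (m:ℤ) = (((b₁ + a : ℕ)) : ℤ) := by omega
      have e3 : (m:ℤ) = ((b₁ : ℕ) : ℤ) := by omega
      rw [e4, e2, e1, e3, g_diag, g_diag, g_diag, g_diag]
      ring
    · have h1 : g ((d:ℤ) - (m:ℤ)) b₂ = 0 := g_eq_zero (by omega) (by omega)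
      have h2 : g ((d:ℤ) - ((a:ℤ) + (m:ℤ))) (b₂ - a) = 0 := g_eq_zero (by omega) (by omega)
      rw [h1, h2]
      ring
  · -- (iv) b₂ < a
    intro hab
    rw [Kbox_eq]
    apply kill
    intro m hm
    rw [Finset.mem_range] at hm
    have hmd' : m ≤ d := by omega
    simp only [Polynomial.IsRoot]
    rw [Polynomial.eval_mul, qk_eval d _ _ hmd', qk2_eval d _ _ hmd']
    simp only [zero_add]
    have h1 : g ((m:ℤ)) b₁ = 0 := g_eq_zero (by omega) (by omega)
    rw [h1, zero_mul]
end
end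

section
/- For all a ∈ ℤ and all b, k, s ∈ ℕ with 1 ≤ s ≤ k − 1, the following identity holds in ℚ(v): [a−s]·[b+s; s]·[b+k; k−s] − [a−k]·[k−1; s−1]·[b+k; k] = [a]·[k−1; s]·[b+k; k]. -/
noncomputable section

lemma v_ne_zero : v ≠ 0 := RatFunc.X_ne_zero

lemma v_pow_ne_one {n : ℕ} (hn : 0 < n) : v ^ n ≠ 1 := by
  intro h
  have hinj := IsFractionRing.injective (Polynomial ℚ) F
  have h2 : algebraMap (Polynomial ℚ) F (Polynomial.X ^ n) = algebraMap (Polynomial ℚ) F 1 := by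
    simpa [map_pow, RatFunc.algebraMap_X, v] using h
  have h3 : (Polynomial.X : Polynomial ℚ) ^ n = 1 := hinj h2
  have := congrArg Polynomial.natDegree h3
  simp [Polynomial.natDegree_X_pow] at this
  omega

lemma vden_ne_zero : v - v⁻¹ ≠ 0 := by
  intro h
  have h1 : v * v - 1 = 0 := by
    have := congrArg (· * v) h
    field_simp [v_ne_zero] at this
    linear_combination this
  have : v ^ 2 = 1 := by rw [pow_two]; linear_combination h1
  exact v_pow_ne_one (by norm_num) this

lemma qint_ne_zero {r : ℤ} (hr : r ≠ 0) : qint r ≠ 0 := by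
  unfold qint
  apply div_ne_zero _ vden_ne_zero
  intro h
  have hrr : v ^ r = v ^ (-r) := sub_eq_zero.mp h
  have h2 : v ^ (2 * r) = 1 := by
    calc v ^ (2 * r) = v ^ r / v ^ (-r) := by
          rw [← zpow_sub₀ v_ne_zero]; ring_nf
      _ = 1 := by rw [← hrr, div_self (zpow_ne_zero _ v_ne_zero)]
  rcases lt_or_gt_of_ne hr with h' | h'
  · have h3 : v ^ (2 * (-r)) = 1 := by rw [mul_neg, zpow_neg, h2, inv_one]
    have : v ^ (2 * (-r)).toNat = 1 := by
      rw [← zpow_natCast, Int.toNat_of_nonneg (by omega)]; exact h3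
    exact v_pow_ne_one (by omega) this
  · have : v ^ (2 * r).toNat = 1 := by
      rw [← zpow_natCast, Int.toNat_of_nonneg (by omega)]; exact h2
    exact v_pow_ne_one (by omega) this

lemma qfact_ne_zero (m : ℕ) : qfact m ≠ 0 := by
  unfold qfact
  apply Finset.prod_ne_zero_iff.mpr
  intro i _
  exact qint_ne_zero (by omega)

lemma key (a s k : ℤ) :
    qint (a - s) * qint k - qint (a - k) * qint s = qint a * qint (k - s) := by
  unfold qint
  have h0 := v_ne_zero
  rw [div_mul_div_comm, div_mul_div_comm, div_mul_div_comm, div_sub_div_same]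
  congr 1
  have e : ∀ x y : ℤ, v ^ (x - y) = v ^ x / v ^ y := fun x y => zpow_sub₀ h0 x y
  simp only [neg_sub, e, zpow_neg]
  field_simp
  ring

lemma qfact_succ (m : ℕ) : qfact (m + 1) = qfact m * qint ((m : ℤ) + 1) := by
  unfold qfact
  rw [Finset.prod_range_succ]

lemma prod_desc (n s : ℕ) (h : s ≤ n) :
    (∏ i ∈ Finset.range s, qint ((n : ℤ) - (i : ℤ))) * qfact (n - s) = qfact n := by
  induction s with
  | zero => simp
  | succ t ih =>
    rw [Finset.prod_range_succ]
    have h2 : qfact (n - t) = qfact (n - (t+1)) * qint ((n : ℤ) - (t : ℤ)) := by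
      rw [show n - t = (n - (t+1)) + 1 by omega, qfact_succ]
      congr 1
      rw [Nat.cast_sub h]
      push_cast
      ring
    have := ih (by omega)
    rw [← this, h2]
    ring

lemma qbinom_nat (n s : ℕ) (h : s ≤ n) :
    qbinom (n : ℤ) s = qfact n / (qfact s * qfact (n - s)) := by
  unfold qbinom
  rw [← prod_desc n s h, mul_div_mul_right _ _ (qfact_ne_zero (n - s))]

/-- for all `a ∈ ℤ` and `b, k, s ∈ ℕ` with `1 ≤ s ≤ k − 1`, in `ℚ(v)`:
`[a−s]·[b+s; s]·[b+k; k−s] − [a−k]·[k−1; s−1]·[b+k; k] = [a]·[k−1; s]·[b+k; k]`. -/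
theorem stmt19 (a : ℤ) (b k s : ℕ) (hs : 1 ≤ s) (hsk : s ≤ k - 1) :
    qint (a - (s : ℤ)) * qbinom ((b : ℤ) + (s : ℤ)) s * qbinom ((b : ℤ) + (k : ℤ)) (k - s) -
      qint (a - (k : ℤ)) * qbinom ((k : ℤ) - 1) (s - 1) * qbinom ((b : ℤ) + (k : ℤ)) k =
    qint a * qbinom ((k : ℤ) - 1) s * qbinom ((b : ℤ) + (k : ℤ)) k := by

  obtain ⟨t, rfl⟩ : ∃ t, s = t + 1 := ⟨s - 1, by omega⟩
  obtain ⟨d, rfl⟩ : ∃ d, k = t + d + 2 := ⟨k - t - 2, by omega⟩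
  have e1 : ((b : ℤ) + ((t:ℕ)+1 : ℕ)) = ((b + (t+1) : ℕ) : ℤ) := by push_cast; ring
  have e2 : ((b : ℤ) + ((t+d+2 : ℕ) : ℤ)) = ((b + (t+d+2) : ℕ) : ℤ) := by push_cast; ring
  have e3 : (((t+d+2 : ℕ) : ℤ) - 1) = ((t+d+1 : ℕ) : ℤ) := by push_cast; ring
  rw [show t+d+2-(t+1) = d+1 from by omega, show t+1-1 = t from by omega, e1, e2, e3]
  rw [qbinom_nat (b+(t+1)) (t+1) (by omega),
      qbinom_nat (b+(t+d+2)) (d+1) (by omega),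
      qbinom_nat (t+d+1) t (by omega),
      qbinom_nat (b+(t+d+2)) (t+d+2) (by omega),
      qbinom_nat (t+d+1) (t+1) (by omega)]
  rw [show b+(t+1)-(t+1) = b from by omega,
      show b+(t+d+2)-(d+1) = b+(t+1) from by omega,
      show t+d+1-t = d+1 from by omega,
      show b+(t+d+2)-(t+d+2) = b from by omega,
      show t+d+1-(t+1) = d from by omega]
  rw [show (t:ℕ)+1 = t+1 from rfl]
  rw [qfact_succ t, qfact_succ d,
      show (t+d+2 : ℕ) = (t+d+1)+1 from by omega, qfact_succ (t+d+1)]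
  push_cast
  have hT : qint ((t:ℤ)+1) ≠ 0 := qint_ne_zero (by omega)
  have hD : qint ((d:ℤ)+1) ≠ 0 := qint_ne_zero (by omega)
  have hK : qint ((t:ℤ)+(d:ℤ)+1+1) ≠ 0 := qint_ne_zero (by omega)
  have hkey := key a ((t:ℤ)+1) ((t:ℤ)+(d:ℤ)+1+1)
  rw [show ((t:ℤ)+(d:ℤ)+1+1) - ((t:ℤ)+1) = (d:ℤ)+1 from by ring] at hkey
  field_simp [qfact_ne_zero, hT, hD, hK]
  linear_combination hkey
end
end
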